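/- Let f̄₁, f̄₂: X → ℝ be η-strongly concave functions on a nonempty compact convex set X ⊆ ℝ^n with maximizers φ̄₁, φ̄₂ respectively. If sup_{φ ∈ X} |f̄₁(φ) − f̄₂(φ)| ≤ ε, then ‖φ̄₁ − φ̄₂‖² ≤ 2ε/η. -/

import Mathlib

open scoped RealInnerProductSpace
open Filter Set Topology

/-! A maximizer `φ` of an `η`-strongly concave function `f` satisfies the quadratic growth bound
`f y + η/2 ‖y - φ‖² ≤ f φ`. Applying it to `f₁` at `φ₂` and to `f₂` at `φ₁` and adding,
`η ‖φ₁ - φ₂‖² ≤ (f₁ φ₁ - f₂ φ₁) + (f₂ φ₂ - f₁ φ₂) ≤ 2ε`. -/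

variable {E : Type*} [NormedAddCommGroup E] [InnerProductSpace ℝ E]

def HasStrongSupergradientsOn (η : ℝ) (X : Set E) (f : E → ℝ) : Prop :=
  ∀ x ∈ X, ∃ g, ∀ y ∈ X, f y ≤ f x + ⟪g, y - x⟫ - η / 2 * ‖y - x‖ ^ 2

namespace HasStrongSupergradientsOn

variable {η : ℝ} {X : Set E} {f : E → ℝ} {φ y : E}

/-- Uses the supergradient at the intermediate point `x = (1 - t) φ + t y`, tested at both
endpoints; the weighted sum of the two inequalities cancels the supergradient. -/
theorem add_mul_norm_sub_sq_le_of_mem_Ioo (hsc : HasStrongSupergradientsOn η X f)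
    (hcv : Convex ℝ X) (hmax : IsMaxOn f X φ) (hφ : φ ∈ X) (hy : y ∈ X)
    {t : ℝ} (ht : t ∈ Ioo (0 : ℝ) 1) :
    f y + η / 2 * (1 - t) * ‖y - φ‖ ^ 2 ≤ f φ := by
  obtain ⟨ht0, ht1⟩ := ht
  set x := (1 - t) • φ + t • y
  have hx : x ∈ X := hcv hφ hy (by linarith) ht0.le (by ring)
  obtain ⟨g, hg⟩ := hsc x hx
  have hyx : y - x = (1 - t) • (y - φ) := by module
  have hφx : φ - x = (-t) • (y - φ) := by module
  have h₁ := hg y hy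
  have h₂ := hg φ hφ
  rw [hyx, real_inner_smul_right, norm_smul, mul_pow, Real.norm_eq_abs, sq_abs] at h₁
  rw [hφx, real_inner_smul_right, norm_smul, mul_pow, Real.norm_eq_abs, sq_abs] at h₂
  have hfx : f x ≤ f φ := isMaxOn_iff.mp hmax x hx
  nlinarith [mul_pos ht0 (sub_pos.mpr ht1), sq_nonneg ‖y - φ‖]

theorem add_mul_norm_sub_sq_le (hsc : HasStrongSupergradientsOn η X f)
    (hcv : Convex ℝ X) (hmax : IsMaxOn f X φ) (hφ : φ ∈ X) (hy : y ∈ X) :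
    f y + η / 2 * ‖y - φ‖ ^ 2 ≤ f φ := by
  have hlim : Tendsto (fun t : ℝ => f y + η / 2 * (1 - t) * ‖y - φ‖ ^ 2) (𝓝[>] 0)
      (𝓝 (f y + η / 2 * (1 - 0) * ‖y - φ‖ ^ 2)) :=
    tendsto_nhdsWithin_of_tendsto_nhds (Continuous.tendsto (by fun_prop) 0)
  have hbound : ∀ᶠ t in 𝓝[>] (0 : ℝ), f y + η / 2 * (1 - t) * ‖y - φ‖ ^ 2 ≤ f φ :=
    Filter.mem_of_superset (Ioo_mem_nhdsGT one_pos) fun t ht =>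
      hsc.add_mul_norm_sub_sq_le_of_mem_Ioo hcv hmax hφ hy ht
  simpa using le_of_tendsto hlim hbound

end HasStrongSupergradientsOn

theorem norm_sub_sq_le_of_abs_sub_le {X : Set E} (hcv : Convex ℝ X) {f₁ f₂ : E → ℝ} {η ε : ℝ}
    (hη : 0 < η) (hsc₁ : HasStrongSupergradientsOn η X f₁)
    (hsc₂ : HasStrongSupergradientsOn η X f₂) {φ₁ φ₂ : E} (hφ₁ : φ₁ ∈ X) (hφ₂ : φ₂ ∈ X)
    (hmax₁ : IsMaxOn f₁ X φ₁) (hmax₂ : IsMaxOn f₂ X φ₂)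
    (hclose : ∀ φ ∈ X, |f₁ φ - f₂ φ| ≤ ε) :
    ‖φ₁ - φ₂‖ ^ 2 ≤ 2 * ε / η := by
  have h₁ := hsc₁.add_mul_norm_sub_sq_le hcv hmax₁ hφ₁ hφ₂
  have h₂ := hsc₂.add_mul_norm_sub_sq_le hcv hmax₂ hφ₂ hφ₁
  rw [norm_sub_rev] at h₁
  have hc₁ := abs_le.mp (hclose φ₁ hφ₁)
  have hc₂ := abs_le.mp (hclose φ₂ hφ₂)
  rw [le_div_iff₀ hη]
  linarith [hc₁.1, hc₂.2]

theorem stmt_16_general {n : ℕ} (X : Set (EuclideanSpace ℝ (Fin n)))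
    (hcv : Convex ℝ X)
    (f₁ f₂ : EuclideanSpace ℝ (Fin n) → ℝ) (η ε : ℝ) (hη : 0 < η)
    (hsc₁ : ∀ x ∈ X, ∃ g, ∀ y ∈ X, f₁ y ≤ f₁ x + ⟪g, y - x⟫ - η / 2 * ‖y - x‖ ^ 2)
    (hsc₂ : ∀ x ∈ X, ∃ g, ∀ y ∈ X, f₂ y ≤ f₂ x + ⟪g, y - x⟫ - η / 2 * ‖y - x‖ ^ 2)
    (φ₁ φ₂ : EuclideanSpace ℝ (Fin n)) (hφ₁ : φ₁ ∈ X) (hφ₂ : φ₂ ∈ X)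
    (hmax₁ : ∀ y ∈ X, f₁ y ≤ f₁ φ₁) (hmax₂ : ∀ y ∈ X, f₂ y ≤ f₂ φ₂)
    (hclose : ∀ φ ∈ X, |f₁ φ - f₂ φ| ≤ ε) :
    ‖φ₁ - φ₂‖ ^ 2 ≤ 2 * ε / η :=
  norm_sub_sq_le_of_abs_sub_le hcv hη hsc₁ hsc₂ hφ₁ hφ₂ (isMaxOn_iff.mpr hmax₁)
    (isMaxOn_iff.mpr hmax₂) hclose

/-- Stability of maximizers of strongly concave functions: if `f₁, f₂` are
`η`-strongly concave on a nonempty compact convex `X` (supergradient form with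
`η/2`), with maximizers `φ̄₁, φ̄₂`, and `|f₁ - f₂| ≤ ε` uniformly on `X`, then
`‖φ̄₁ - φ̄₂‖² ≤ 2ε/η`. -/
theorem stmt_16 {n : ℕ} (X : Set (EuclideanSpace ℝ (Fin n)))
    (hne : X.Nonempty) (hcpt : IsCompact X) (hcv : Convex ℝ X)
    (f₁ f₂ : EuclideanSpace ℝ (Fin n) → ℝ) (η ε : ℝ) (hη : 0 < η) (hε : 0 ≤ ε)
    (hsc₁ : ∀ x ∈ X, ∃ g, ∀ y ∈ X, f₁ y ≤ f₁ x + ⟪g, y - x⟫ - η / 2 * ‖y - x‖ ^ 2)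
    (hsc₂ : ∀ x ∈ X, ∃ g, ∀ y ∈ X, f₂ y ≤ f₂ x + ⟪g, y - x⟫ - η / 2 * ‖y - x‖ ^ 2)
    (φ₁ φ₂ : EuclideanSpace ℝ (Fin n)) (hφ₁ : φ₁ ∈ X) (hφ₂ : φ₂ ∈ X)
    (hmax₁ : ∀ y ∈ X, f₁ y ≤ f₁ φ₁) (hmax₂ : ∀ y ∈ X, f₂ y ≤ f₂ φ₂)
    (hclose : ∀ φ ∈ X, |f₁ φ - f₂ φ| ≤ ε) :
    ‖φ₁ - φ₂‖ ^ 2 ≤ 2 * ε / η :=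
  stmt_16_general X hcv f₁ f₂ η ε hη hsc₁ hsc₂ φ₁ φ₂ hφ₁ hφ₂ hmax₁ hmax₂ hclose
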